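/- Let H be a complex Hilbert space, and let P, Q, R be orthogonal projections on H with Q - P and R - Q compact. Then R - P is compact, and ind(RP : im P → im R) = ind(RQ : im Q → im R) + ind(QP : im P → im Q). -/

import Mathlib

open ContinuousLinearMap

/-- The Fredholm index of a bounded operator: `dim ker - dim coker`. -/
noncomputable def fredholmIndex {E F : Type*} [NormedAddCommGroup E] [NormedSpace ℂ E]
    [NormedAddCommGroup F] [NormedSpace ℂ F] (T : E →L[ℂ] F) : ℤ :=
  (Module.finrank ℂ (LinearMap.ker (T : E →ₗ[ℂ] F)) : ℤ) - Module.finrank ℂ (F ⧸ LinearMap.range (T : E →ₗ[ℂ] F))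

/-- The operator `Q P` viewed as a map from `im P` to `im Q`. -/
noncomputable def relOp {H : Type*} [NormedAddCommGroup H] [InnerProductSpace ℂ H]
    [CompleteSpace H] (P Q : H →L[ℂ] H) :
    ↥(LinearMap.range (P : H →ₗ[ℂ] H)) →L[ℂ] ↥(LinearMap.range (Q : H →ₗ[ℂ] H)) :=
  (Q.comp (LinearMap.range (P : H →ₗ[ℂ] H)).subtypeL).codRestrict (LinearMap.range (Q : H →ₗ[ℂ] H))
    (fun x => LinearMap.mem_range_self (Q : H →ₗ[ℂ] H) _)

/-!
Write `T_{PQ} := relOp P Q : im P → im Q`, `x ↦ Q x`. On `im P` one has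
`T_{QP} T_{PQ} - 1 = P (Q - P)` and `T_{RP} T_{QR} T_{PQ} - 1 = P ((R - Q) Q + (Q - P))`, both
compact, and their adjoints are of the same form. An operator `T` with `T - 1` and `T* - 1` compact
has index zero: if `dim ker T ≤ dim ker T*`, perturb `T` by a finite-rank map sending `ker T`
injectively into `ker T* = (range T)ᗮ`; the result is injective, hence onto by the Fredholm
alternative, which forces `dim ker T = dim ker T*` and `range T + ker T* = H`. The index is
additive under composition by the exact sequence
`0 → ker f → ker gf → ker g → coker f → coker gf → coker g → 0`, so
`ind T_{QP} + ind T_{PQ} = 0` and `ind T_{RP} + ind T_{QR} + ind T_{PQ} = 0`, which combine to the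
claim.
-/

open Module

section Exact

variable {K A B C : Type*} [Field K] [AddCommGroup A] [Module K A] [AddCommGroup B] [Module K B]
  [AddCommGroup C] [Module K C] {a : A →ₗ[K] B} {b : B →ₗ[K] C}

theorem Function.Exact.finrank_range_add_finrank_range (hab : Function.Exact a b)
    [FiniteDimensional K B] : finrank K a.range + finrank K b.range = finrank K B := by
  rw [← LinearMap.exact_iff.1 hab, add_comm]
  exact b.finrank_range_add_finrank_ker

theorem Function.Exact.finiteDimensional (hab : Function.Exact a b) [FiniteDimensional K A]
    [FiniteDimensional K C] : FiniteDimensional K B :=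
  Module.Finite.of_exact (g := b.rangeRestrict)
    (LinearMap.exact_iff.2 <| by rw [LinearMap.ker_rangeRestrict, LinearMap.exact_iff.1 hab])
    b.surjective_rangeRestrict

end Exact

namespace LinearMap

variable {K V W U : Type*} [Field K] [AddCommGroup V] [Module K V] [AddCommGroup W] [Module K W]
  [AddCommGroup U] [Module K U] (f : V →ₗ[K] W) (g : W →ₗ[K] U)

theorem range_le_comap_range_comp : f.range ≤ (g ∘ₗ f).range.comap g := by
  rintro _ ⟨x, rfl⟩
  exact ⟨x, rfl⟩

theorem exact_inclusion_restrict_ker_comp :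
    Function.Exact (Submodule.inclusion (ker_le_ker_comp f g))
      (f.restrict (p := (g ∘ₗ f).ker) (q := g.ker) fun _ hx ↦ hx) := by
  rintro ⟨x, hx⟩
  constructor
  · intro h
    exact ⟨⟨x, congrArg Subtype.val h⟩, rfl⟩
  · rintro ⟨⟨x', hx'⟩, h⟩
    cases h
    exact Subtype.ext hx'

theorem exact_restrict_ker_comp_mkQ :
    Function.Exact (f.restrict (p := (g ∘ₗ f).ker) (q := g.ker) fun _ hx ↦ hx)
      (f.range.mkQ ∘ₗ g.ker.subtype) := by
  rintro ⟨y, hy⟩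
  simp only [comp_apply, Submodule.subtype_apply, Submodule.mkQ_apply,
    Submodule.Quotient.mk_eq_zero]
  constructor
  · rintro ⟨x, rfl⟩
    exact ⟨⟨x, by simpa using hy⟩, rfl⟩
  · rintro ⟨x, hx⟩
    exact ⟨x, congrArg Subtype.val hx⟩

theorem exact_mkQ_mapQ_comp :
    Function.Exact (f.range.mkQ ∘ₗ g.ker.subtype)
      (f.range.mapQ (g ∘ₗ f).range g (range_le_comap_range_comp f g)) := by
  intro z
  induction z using Submodule.Quotient.induction_on with | H w => ?_
  simp only [Submodule.mapQ_apply, Submodule.Quotient.mk_eq_zero, Set.mem_range, comp_apply,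
    Submodule.subtype_apply, Submodule.mkQ_apply, Submodule.Quotient.eq, Subtype.exists, mem_ker]
  constructor
  · rintro ⟨x, hx⟩
    exact ⟨w - f x, by simp [← hx], -x, by simp⟩
  · rintro ⟨y, hy, x, hx⟩
    exact ⟨-x, by simp [hx, hy]⟩

theorem exact_mapQ_comp_factor :
    Function.Exact (f.range.mapQ (g ∘ₗ f).range g (range_le_comap_range_comp f g))
      (Submodule.factor (range_comp_le_range f g)) := by
  intro u
  induction u using Submodule.Quotient.induction_on with | H u => ?_
  rw [← Submodule.mkQ_apply, Submodule.factor_mk, Submodule.mkQ_apply,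
    Submodule.Quotient.mk_eq_zero]
  constructor
  · rintro ⟨w, rfl⟩
    exact ⟨Submodule.Quotient.mk w, rfl⟩
  · rintro ⟨w, hw⟩
    induction w using Submodule.Quotient.induction_on with | H w => ?_
    rw [Submodule.mapQ_apply, Submodule.mkQ_apply, Submodule.Quotient.eq] at hw
    obtain ⟨x, hx⟩ := hw
    exact ⟨w - f x, by rw [map_sub, ← comp_apply, hx, sub_sub_cancel]⟩

theorem finiteDimensional_ker_comp [FiniteDimensional K f.ker] [FiniteDimensional K g.ker] :
    FiniteDimensional K (g ∘ₗ f).ker :=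
  (exact_inclusion_restrict_ker_comp f g).finiteDimensional

theorem finiteDimensional_coker_comp [FiniteDimensional K (W ⧸ f.range)]
    [FiniteDimensional K (U ⧸ g.range)] : FiniteDimensional K (U ⧸ (g ∘ₗ f).range) :=
  (exact_mapQ_comp_factor f g).finiteDimensional

theorem finrank_ker_comp_sub_finrank_coker_comp [FiniteDimensional K f.ker]
    [FiniteDimensional K (W ⧸ f.range)] [FiniteDimensional K g.ker]
    [FiniteDimensional K (U ⧸ g.range)] :
    (finrank K (g ∘ₗ f).ker : ℤ) - finrank K (U ⧸ (g ∘ₗ f).range) =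
      (finrank K g.ker - finrank K (U ⧸ g.range)) +
        (finrank K f.ker - finrank K (W ⧸ f.range)) := by
  have := finiteDimensional_ker_comp f g
  have := finiteDimensional_coker_comp f g
  have h₁ := (exact_inclusion_restrict_ker_comp f g).finrank_range_add_finrank_range
  have h₂ := (exact_restrict_ker_comp_mkQ f g).finrank_range_add_finrank_range
  have h₃ := (exact_mkQ_mapQ_comp f g).finrank_range_add_finrank_range
  have h₄ := (exact_mapQ_comp_factor f g).finrank_range_add_finrank_range
  rw [finrank_range_of_inj (Submodule.inclusion_injective _)] at h₁
  rw [range_eq_top.2 (Submodule.factor_surjective _), finrank_top] at h₄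
  omega

end LinearMap

theorem fredholmIndex_comp {E F G : Type*} [NormedAddCommGroup E] [NormedSpace ℂ E]
    [NormedAddCommGroup F] [NormedSpace ℂ F] [NormedAddCommGroup G] [NormedSpace ℂ G]
    (f : E →L[ℂ] F) (g : F →L[ℂ] G) [FiniteDimensional ℂ f.ker]
    [FiniteDimensional ℂ (F ⧸ f.range)] [FiniteDimensional ℂ g.ker]
    [FiniteDimensional ℂ (G ⧸ g.range)] :
    fredholmIndex (g ∘L f) = fredholmIndex g + fredholmIndex f :=
  LinearMap.finrank_ker_comp_sub_finrank_coker_comp (f : E →ₗ[ℂ] F) (g : F →ₗ[ℂ] G)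

section Compact

variable {𝕜 E F : Type*} [NontriviallyNormedField 𝕜] [NormedAddCommGroup E] [NormedSpace 𝕜 E]
  [NormedAddCommGroup F] [NormedSpace 𝕜 F]

theorem isCompactOperator_sub_comm {A B : E →L[𝕜] F} :
    IsCompactOperator ⇑(A - B) ↔ IsCompactOperator ⇑(B - A) := by
  constructor <;> intro h <;> rw [← neg_sub, FunLike.coe_neg] <;> exact h.neg

theorem isCompactOperator_sub_trans {A B C : E →L[𝕜] F} (hAB : IsCompactOperator ⇑(A - B))
    (hBC : IsCompactOperator ⇑(B - C)) : IsCompactOperator ⇑(A - C) := by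
  rw [← sub_add_sub_cancel A B C, FunLike.coe_add]
  exact hAB.add hBC

variable {T : E →L[𝕜] E}

theorem IsCompactOperator.finiteDimensional_ker_of_sub_one [CompleteSpace 𝕜]
    (hT : IsCompactOperator ⇑(T - 1)) : FiniteDimensional 𝕜 T.ker := by
  have hmaps : ∀ x ∈ T.ker, (1 - T) x ∈ T.ker := fun x hx ↦ by simp_all
  have h := (isCompactOperator_sub_comm.1 hT).restrict
    (f := ((1 - T : E →L[𝕜] E) : E →ₗ[𝕜] E)) hmaps T.isClosed_ker
  have hid : ⇑(((1 - T : E →L[𝕜] E) : E →ₗ[𝕜] E).restrict hmaps) = id := by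
    funext x
    exact Subtype.ext (by simp)
  exact FiniteDimensional.of_isCompactOperator_id (hid ▸ h)

theorem IsCompactOperator.surjective_of_injective_of_sub_one [CompleteSpace E]
    (hT : IsCompactOperator ⇑(T - 1)) (hinj : Function.Injective T) : Function.Surjective T := by
  rcases hT.hasEigenvalue_or_mem_resolventSet (neg_ne_zero.2 (one_ne_zero (α := 𝕜))) with h | h
  · obtain ⟨x, hx, hx0⟩ := h.exists_hasEigenvector
    rw [Module.End.mem_eigenspace_iff] at hx
    refine absurd (hinj (a₂ := 0) ?_) hx0
    simpa using hx
  · rw [spectrum.mem_resolventSet_iff, isUnit_iff_bijective] at h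
    intro y
    obtain ⟨x, hx⟩ := h.2 (-y)
    exact ⟨x, by simpa [sub_eq_add_neg, add_comm] using hx⟩

end Compact

section Hilbert

variable {𝕜 E : Type*} [RCLike 𝕜] [NormedAddCommGroup E] [InnerProductSpace 𝕜 E] [CompleteSpace E]
  {T : E →L[𝕜] E}

theorem IsCompactOperator.finrank_ker_adjoint_le_and_codisjoint (hT : IsCompactOperator ⇑(T - 1))
    (hT' : IsCompactOperator ⇑(adjoint T - 1))
    (h : finrank 𝕜 T.ker ≤ finrank 𝕜 (adjoint T).ker) :
    finrank 𝕜 (adjoint T).ker ≤ finrank 𝕜 T.ker ∧ Codisjoint T.range (adjoint T).ker := by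
  have := hT.finiteDimensional_ker_of_sub_one
  have : FiniteDimensional 𝕜 T.rangeᗮ :=
    orthogonal_range T ▸ hT'.finiteDimensional_ker_of_sub_one
  rw [← orthogonal_range] at h ⊢
  obtain ⟨F₀, hF₀⟩ := finrank_le_iff_exists_linearMap.1 h
  set F : E →L[𝕜] E :=
    T.rangeᗮ.subtypeL ∘L F₀.toContinuousLinearMap ∘L T.ker.orthogonalProjectionOnto
  have hF : IsCompactOperator F :=
    (isCompactOperator_of_locallyCompactSpace_dom
      (F₀.toContinuousLinearMap ∘L T.ker.orthogonalProjectionOnto)).clm_comp T.rangeᗮ.subtypeL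
  have hS_ker : ∀ x (hx : x ∈ T.ker), (T + F) x = F₀ ⟨x, hx⟩ := fun x hx ↦ by
    simp [F, show T x = 0 from hx,
      Submodule.orthogonalProjectionOnto_mem_subspace_eq_self ⟨x, hx⟩]
  have hF_mem : ∀ x, F x ∈ T.rangeᗮ := fun x ↦ (F₀ _).2
  have h_ker : ∀ x, (T + F) x ∈ T.rangeᗮ → x ∈ T.ker := fun x hx ↦ by
    have hTx : T x ∈ T.rangeᗮ := by simpa using sub_mem hx (hF_mem x)
    exact (Submodule.orthogonal_disjoint T.range).le_bot ⟨⟨x, rfl⟩, hTx⟩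
  have hS : Function.Surjective (T + F) := by
    refine IsCompactOperator.surjective_of_injective_of_sub_one ?_ ?_
    · rw [add_sub_right_comm, FunLike.coe_add]
      exact hT.add hF
    · refine (injective_iff_map_eq_zero _).2 fun x hx ↦ ?_
      have hx' := h_ker x (hx ▸ zero_mem _)
      have h0 : F₀ ⟨x, hx'⟩ = 0 := Subtype.ext (by rw [← hS_ker, hx]; rfl)
      exact congrArg Subtype.val ((map_eq_zero_iff F₀ hF₀).1 h0)
  refine ⟨LinearMap.finrank_le_finrank_of_surjective (f := F₀) fun y ↦ ?_,
    codisjoint_iff.2 (eq_top_iff.2 fun y _ ↦ ?_)⟩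
  · obtain ⟨x, hx⟩ := hS y
    exact ⟨⟨x, h_ker x (hx ▸ y.2)⟩, Subtype.ext (by rw [← hS_ker, hx])⟩
  · obtain ⟨x, rfl⟩ := hS y
    exact Submodule.add_mem_sup ⟨x, rfl⟩ (hF_mem x)

theorem IsCompactOperator.finrank_ker_eq_finrank_ker_adjoint (hT : IsCompactOperator ⇑(T - 1))
    (hT' : IsCompactOperator ⇑(adjoint T - 1)) :
    finrank 𝕜 T.ker = finrank 𝕜 (adjoint T).ker := by
  rcases le_total (finrank 𝕜 T.ker) (finrank 𝕜 (adjoint T).ker) with h | h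
  · exact h.antisymm (hT.finrank_ker_adjoint_le_and_codisjoint hT' h).1
  · have hT'' : IsCompactOperator ⇑(adjoint (adjoint T) - 1) := by rwa [adjoint_adjoint]
    have h' := (hT'.finrank_ker_adjoint_le_and_codisjoint hT'' (by rwa [adjoint_adjoint])).1
    rw [adjoint_adjoint] at h'
    exact h'.antisymm h

theorem IsCompactOperator.isCompl_range_ker_adjoint (hT : IsCompactOperator ⇑(T - 1))
    (hT' : IsCompactOperator ⇑(adjoint T - 1)) : IsCompl T.range (adjoint T).ker :=
  ⟨orthogonal_range T ▸ Submodule.orthogonal_disjoint T.range,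
    (hT.finrank_ker_adjoint_le_and_codisjoint hT'
      (hT.finrank_ker_eq_finrank_ker_adjoint hT').le).2⟩

end Hilbert

section IndexZero

variable {E : Type*} [NormedAddCommGroup E] [InnerProductSpace ℂ E] [CompleteSpace E]
  {T : E →L[ℂ] E}

theorem IsCompactOperator.finiteDimensional_coker_of_sub_one (hT : IsCompactOperator ⇑(T - 1))
    (hT' : IsCompactOperator ⇑(adjoint T - 1)) : FiniteDimensional ℂ (E ⧸ T.range) :=
  have := hT'.finiteDimensional_ker_of_sub_one
  (Submodule.quotientEquivOfIsCompl _ _ (hT.isCompl_range_ker_adjoint hT')).symm.finiteDimensional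

theorem fredholmIndex_eq_zero_of_isCompactOperator_sub_one (hT : IsCompactOperator ⇑(T - 1))
    (hT' : IsCompactOperator ⇑(adjoint T - 1)) : fredholmIndex T = 0 := by
  rw [fredholmIndex,
    (Submodule.quotientEquivOfIsCompl _ _ (hT.isCompl_range_ker_adjoint hT')).finrank_eq,
    hT.finrank_ker_eq_finrank_ker_adjoint hT', sub_self]

end IndexZero

section Idempotent

variable {𝕜 E : Type*} [NontriviallyNormedField 𝕜] [NormedAddCommGroup E] [NormedSpace 𝕜 E]
  {P : E →L[𝕜] E}

theorem IsIdempotentElem.apply_coe_range (hP : IsIdempotentElem P) (x : P.range) : P x = x :=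
  (LinearMap.IsIdempotentElem.mem_range_iff hP.toLinearMap).1 x.2

theorem IsIdempotentElem.completeSpace_range [CompleteSpace E] (hP : IsIdempotentElem P) :
    CompleteSpace P.range :=
  (ContinuousLinearMap.IsIdempotentElem.isClosed_range hP).completeSpace_coe

theorem isCompactOperator_sub_one_of_coe_apply (hP : IsIdempotentElem P) {A : E →L[𝕜] E}
    (hA : IsCompactOperator ⇑(A - P)) {X : P.range →L[𝕜] P.range}
    (hX : ∀ x, (X x : E) = P (A x)) : IsCompactOperator ⇑(X - 1) := by
  have hD : IsCompactOperator ⇑(P ∘L (A - P) ∘L P.range.subtypeL) :=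
    (hA.comp_clm _).clm_comp P
  have hX' : ⇑(X - 1) = Set.codRestrict (⇑(P ∘L (A - P) ∘L P.range.subtypeL)) P.range
      fun x ↦ ⟨(A - P) x, rfl⟩ := by
    funext x
    apply Subtype.ext
    simp [hX, hP.apply_coe_range]
  rw [hX']
  exact hD.codRestrict _ (ContinuousLinearMap.IsIdempotentElem.isClosed_range hP)

end Idempotent

section Projections

variable {H : Type*} [NormedAddCommGroup H] [InnerProductSpace ℂ H] [CompleteSpace H]
  {P Q R : H →L[ℂ] H}

@[simp]
theorem coe_relOp_apply (x : P.range) : (relOp P Q x : H) = Q x := rfl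

theorem adjoint_relOp (hP : IsStarProjection P) (hQ : IsStarProjection Q) [CompleteSpace P.range]
    [CompleteSpace Q.range] : adjoint (relOp P Q) = relOp Q P := by
  refine ((eq_adjoint_iff _ _).2 fun x y ↦ ?_).symm
  rw [Submodule.coe_inner, Submodule.coe_inner, coe_relOp_apply, coe_relOp_apply]
  calc inner ℂ (P x) (y : H) = inner ℂ (x : H) (P y) := hP.isSelfAdjoint.isSymmetric _ _
    _ = inner ℂ (Q x) (y : H) := by
      rw [hP.isIdempotentElem.apply_coe_range, hQ.isIdempotentElem.apply_coe_range]
    _ = inner ℂ (x : H) (Q y) := hQ.isSelfAdjoint.isSymmetric _ _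

theorem isSelfAdjoint_relOp_comp_relOp (hP : IsStarProjection P) (hQ : IsStarProjection Q)
    [CompleteSpace P.range] [CompleteSpace Q.range] : IsSelfAdjoint (relOp Q P ∘L relOp P Q) := by
  rw [isSelfAdjoint_iff', adjoint_comp, adjoint_relOp hP hQ, adjoint_relOp hQ hP]

theorem isCompactOperator_relOp_comp_relOp_sub_one (hP : IsIdempotentElem P)
    (hQP : IsCompactOperator ⇑(Q - P)) : IsCompactOperator ⇑(relOp Q P ∘L relOp P Q - 1) :=
  isCompactOperator_sub_one_of_coe_apply hP hQP fun _ ↦ rfl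

theorem isCompactOperator_relOp_comp_relOp_comp_relOp_sub_one (hP : IsIdempotentElem P)
    (hQ : IsIdempotentElem Q) (hQP : IsCompactOperator ⇑(Q - P))
    (hRQ : IsCompactOperator ⇑(R - Q)) :
    IsCompactOperator ⇑((relOp R P ∘L relOp Q R) ∘L relOp P Q - 1) := by
  refine isCompactOperator_sub_one_of_coe_apply hP (A := R ∘L Q) ?_ fun _ ↦ rfl
  have h : R ∘L Q - P = (R - Q) ∘L Q + (Q - P) := by
    rw [sub_comp, ← mul_def Q Q, hQ.eq]
    abel
  rw [h, FunLike.coe_add]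
  exact (hRQ.comp_clm Q).add hQP

theorem finiteDimensional_ker_relOp (hP : IsIdempotentElem P) (hQP : IsCompactOperator ⇑(Q - P)) :
    FiniteDimensional ℂ (relOp P Q).ker :=
  have := (isCompactOperator_relOp_comp_relOp_sub_one hP hQP).finiteDimensional_ker_of_sub_one
  Submodule.finiteDimensional_of_le (S₂ := (relOp Q P ∘L relOp P Q).ker)
    (LinearMap.ker_le_ker_comp _ _)

theorem finiteDimensional_coker_relOp (hP : IsStarProjection P) (hQ : IsStarProjection Q)
    (hQP : IsCompactOperator ⇑(Q - P)) :
    FiniteDimensional ℂ (Q.range ⧸ (relOp P Q).range) := by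
  have := hP.isIdempotentElem.completeSpace_range
  have := hQ.isIdempotentElem.completeSpace_range
  have hT := isCompactOperator_relOp_comp_relOp_sub_one hQ.isIdempotentElem
    (isCompactOperator_sub_comm.1 hQP)
  exact Module.Finite.of_surjective (hM := hT.finiteDimensional_coker_of_sub_one
    (by rwa [(isSelfAdjoint_relOp_comp_relOp hQ hP).adjoint_eq])) _
    (Submodule.factor_surjective (LinearMap.range_comp_le_range _ _))

theorem fredholmIndex_relOp_add_fredholmIndex_relOp (hP : IsStarProjection P)
    (hQ : IsStarProjection Q) (hQP : IsCompactOperator ⇑(Q - P)) :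
    fredholmIndex (relOp Q P) + fredholmIndex (relOp P Q) = 0 := by
  have := hP.isIdempotentElem.completeSpace_range
  have := hQ.isIdempotentElem.completeSpace_range
  have hPQ := isCompactOperator_sub_comm.1 hQP
  have := finiteDimensional_ker_relOp hP.isIdempotentElem hQP
  have := finiteDimensional_ker_relOp hQ.isIdempotentElem hPQ
  have := finiteDimensional_coker_relOp hP hQ hQP
  have := finiteDimensional_coker_relOp hQ hP hPQ
  have hT := isCompactOperator_relOp_comp_relOp_sub_one hP.isIdempotentElem hQP
  rw [← fredholmIndex_comp]
  exact fredholmIndex_eq_zero_of_isCompactOperator_sub_one hT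
    (by rwa [(isSelfAdjoint_relOp_comp_relOp hP hQ).adjoint_eq])

theorem fredholmIndex_relOp_add_fredholmIndex_relOp_add_fredholmIndex_relOp
    (hP : IsStarProjection P) (hQ : IsStarProjection Q) (hR : IsStarProjection R)
    (hQP : IsCompactOperator ⇑(Q - P)) (hRQ : IsCompactOperator ⇑(R - Q)) :
    fredholmIndex (relOp R P) + fredholmIndex (relOp Q R) + fredholmIndex (relOp P Q) = 0 := by
  have := hP.isIdempotentElem.completeSpace_range
  have := hQ.isIdempotentElem.completeSpace_range
  have := hR.isIdempotentElem.completeSpace_range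
  have hPR := isCompactOperator_sub_comm.1 (isCompactOperator_sub_trans hRQ hQP)
  have := finiteDimensional_ker_relOp hP.isIdempotentElem hQP
  have := finiteDimensional_ker_relOp hQ.isIdempotentElem hRQ
  have := finiteDimensional_ker_relOp hR.isIdempotentElem hPR
  have := finiteDimensional_coker_relOp hP hQ hQP
  have := finiteDimensional_coker_relOp hQ hR hRQ
  have := finiteDimensional_coker_relOp hR hP hPR
  have : FiniteDimensional ℂ (relOp R P ∘L relOp Q R).ker :=
    LinearMap.finiteDimensional_ker_comp _ _
  have : FiniteDimensional ℂ (P.range ⧸ (relOp R P ∘L relOp Q R).range) :=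
    LinearMap.finiteDimensional_coker_comp _ _
  have hT := isCompactOperator_relOp_comp_relOp_comp_relOp_sub_one hP.isIdempotentElem
    hQ.isIdempotentElem hQP hRQ
  have hT' : IsCompactOperator ⇑(adjoint ((relOp R P ∘L relOp Q R) ∘L relOp P Q) - 1) := by
    rw [adjoint_comp, adjoint_comp, adjoint_relOp hP hQ, adjoint_relOp hQ hR, adjoint_relOp hR hP,
      ← comp_assoc]
    exact isCompactOperator_relOp_comp_relOp_comp_relOp_sub_one hP.isIdempotentElem
      hR.isIdempotentElem (isCompactOperator_sub_comm.1 hPR) (isCompactOperator_sub_comm.1 hRQ)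
  rw [← fredholmIndex_comp, ← fredholmIndex_comp]
  exact fredholmIndex_eq_zero_of_isCompactOperator_sub_one hT hT'

end Projections

/-- Cocycle property of the relative index of projections: if `P, Q, R` are orthogonal
projections with `Q - P` and `R - Q` compact, then `R - P` is compact and
`ind (RP : im P → im R) = ind (RQ : im Q → im R) + ind (QP : im P → im Q)`. -/
theorem relative_index_additive {H : Type*} [NormedAddCommGroup H]
    [InnerProductSpace ℂ H] [CompleteSpace H]
    (P Q R : H →L[ℂ] H)
    (hPsa : IsSelfAdjoint P) (hPidem : P.comp P = P)
    (hQsa : IsSelfAdjoint Q) (hQidem : Q.comp Q = Q)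
    (hRsa : IsSelfAdjoint R) (hRidem : R.comp R = R)
    (hQP : IsCompactOperator ⇑(Q - P)) (hRQ : IsCompactOperator ⇑(R - Q)) :
    IsCompactOperator ⇑(R - P) ∧
    fredholmIndex (relOp P R) = fredholmIndex (relOp Q R) + fredholmIndex (relOp P Q) := by
  have hP : IsStarProjection P := ⟨hPidem, hPsa⟩
  have hQ : IsStarProjection Q := ⟨hQidem, hQsa⟩
  have hR : IsStarProjection R := ⟨hRidem, hRsa⟩
  have hRP := isCompactOperator_sub_trans hRQ hQP
  have h_cocycle := fredholmIndex_relOp_add_fredholmIndex_relOp_add_fredholmIndex_relOp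
    hP hQ hR hQP hRQ
  have h_pair := fredholmIndex_relOp_add_fredholmIndex_relOp hP hR hRP
  exact ⟨hRP, by linarith⟩
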